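/- arXiv:0810.1206 — 2 statements merged into one kernel-verified Lean document; each statement's English description precedes it below -/
import Mathlib

section
/- Let q ∈ [1,∞) and let f be a measurable function on G with _{B(e,r₀)}‖f‖_{q,∞} < ∞ for some r₀ > 0. Then, as equalities in [0,∞]: lim_{r→+∞} _{B(e,r)}‖f‖_{q,∞} = ‖f‖_q = sup_{r>0} _{B(e,r)}‖f‖_{q,∞}, where _{B(e,r)}‖f‖_{q,∞} = ess sup_{y∈G} ‖f·χ_{yB(e,r)}‖_q. -/
open MeasureTheory ENNReal NNReal Set Filter Topology Pointwise

variable {G : Type*} [Group G] [TopologicalSpace G] [IsTopologicalGroup G]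
  [T2Space G] [LocallyCompactSpace G] [SigmaCompactSpace G]
  [MeasurableSpace G] [BorelSpace G]

/-- The norm `_B‖f‖_{q,p}`. -/
noncomputable def blockNorm {E : Type*} [NormedAddCommGroup E]
    (μ : Measure G) (q p : ℝ≥0∞) (B : Set G) (f : G → E) : ℝ≥0∞ :=
  if p = ∞ then essSup (fun y => eLpNorm ((y • B).indicator f) q μ) μ
  else (∫⁻ y, eLpNorm ((y • B).indicator f) q μ ^ p.toReal ∂μ) ^ (1 / p.toReal)

/-- The norm `‖f‖^π_{q,p}` associated to a partition `π`. -/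
noncomputable def partNorm {E : Type*} [NormedAddCommGroup E]
    (μ : Measure G) (q p : ℝ≥0∞) (π : Set (Set G)) (f : G → E) : ℝ≥0∞ :=
  if p = ∞ then ⨆ A ∈ π, eLpNorm (A.indicator f) q μ
  else (∑' A : π, eLpNorm ((A : Set G).indicator f) q μ ^ p.toReal) ^ (1 / p.toReal)

/-- `π` is a `U`–`V` uniform partition of `G`. -/
def IsUniformPartition (π : Set (Set G)) (U V : Set G) : Prop :=
  π.Countable ∧ (∀ A ∈ π, MeasurableSet A) ∧ π.PairwiseDisjoint id ∧
    ⋃₀ π = univ ∧ ∀ A ∈ π, ∃ x ∈ A, x • U ⊆ A ∧ A ⊆ x • V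

/-- The ball `B(x,r)` for the homogeneous norm `nm`. -/
def gball (nm : G → ℝ) (x : G) (r : ℝ) : Set G := {y | nm (x⁻¹ * y) < r}

/-- The norm `‖f‖_{q,p,α}`. -/
noncomputable def alphaNorm {E : Type*} [NormedAddCommGroup E]
    (μ : Measure G) (nm : G → ℝ) (πr : ℝ → Set (Set G))
    (q p α : ℝ≥0∞) (f : G → E) : ℝ≥0∞ :=
  ⨆ (r : ℝ) (_ : 0 < r),
    μ (gball nm 1 r) ^ (α⁻¹.toReal - q⁻¹.toReal) * partNorm μ q p (πr r) f

/-- The decreasing rearrangement `f*`. -/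
noncomputable def rearr (μ : Measure G) (f : G → ℂ) (t : ℝ≥0∞) : ℝ≥0∞ :=
  sInf {s : ℝ≥0∞ | 0 < s ∧ μ {x | s < (‖f x‖₊ : ℝ≥0∞)} ≤ t}

/-- The weak Lorentz quasinorm `‖f‖*_{α,∞}`. -/
noncomputable def weakNorm (μ : Measure G) (α : ℝ≥0∞) (f : G → ℂ) : ℝ≥0∞ :=
  ⨆ (t : ℝ≥0∞) (_ : 0 < t) (_ : t ≠ ∞), t ^ α⁻¹.toReal * rearr μ f t

/-! The balls `B(e, r)` exhaust `G`, so `‖f χ_{B(e,n)}‖_q → ‖f‖_q`. Conversely, by the quasi-triangle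
inequality `B(e, r) ⊆ y B(e, γ (1 + r))` for every `y` in `B(e, 1)`, a set of positive Haar measure,
so `‖f χ_{B(e,r)}‖_q ≤ _{B(e, γ(1+r))}‖f‖_{q,∞} ≤ ‖f‖_q`. Since `r ↦ _{B(e,r)}‖f‖_{q,∞}` is
monotone, its limit at infinity is its supremum, which is therefore `‖f‖_q`. -/

section LpTruncation

variable {α E : Type*} [MeasurableSpace α] [NormedAddCommGroup E] {μ : Measure α} {p : ℝ≥0∞}

lemma eLpNorm_indicator_mono_set {s t : Set α} (hst : s ⊆ t) (f : α → E) :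
    eLpNorm (s.indicator f) p μ ≤ eLpNorm (t.indicator f) p μ :=
  eLpNorm_mono_enorm fun x => by
    simp only [enorm_indicator_eq_indicator_enorm]
    exact indicator_le_indicator_of_subset hst (fun _ => zero_le) x

lemma tendsto_eLpNorm_restrict_of_monotone {s : ℕ → Set α} (hs : Monotone s)
    (hcover : ⋃ n, s n = univ) (f : α → E) :
    Tendsto (fun n => eLpNorm f p (μ.restrict (s n))) atTop (𝓝 (eLpNorm f p μ)) := by
  rcases eq_or_ne p 0 with rfl | hp0
  · simp
  rcases eq_or_ne p ∞ with rfl | hp_top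
  · have hmono : Monotone fun n => eLpNorm f ∞ (μ.restrict (s n)) := fun m n hmn =>
      eLpNorm_mono_measure f (Measure.restrict_mono (hs hmn) le_rfl)
    convert tendsto_atTop_iSup hmono
    refine le_antisymm ?_ (iSup_le fun n => eLpNorm_mono_measure f Measure.restrict_le_self)
    rw [eLpNorm_exponent_top]
    have hbound : ∀ᵐ x ∂μ.restrict (⋃ n, s n), ‖f x‖ₑ ≤ ⨆ n, eLpNorm f ∞ (μ.restrict (s n)) :=
      (ae_restrict_iUnion_iff _ _).2 fun n =>
        ae_le_eLpNormEssSup.mono fun x hx => hx.trans (le_iSup_of_le n le_rfl)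
    rw [hcover, Measure.restrict_univ] at hbound
    exact essSup_le_of_ae_le _ hbound
  · simp_rw [eLpNorm_eq_lintegral_rpow_enorm_toReal hp0 hp_top]
    refine (ENNReal.continuous_rpow_const.tendsto _).comp ?_
    have hunion := setLIntegral_iUnion_of_directed (μ := μ) (fun x => ‖f x‖ₑ ^ p.toReal)
      hs.directed_le
    rw [hcover, Measure.restrict_univ] at hunion
    rw [hunion]
    exact tendsto_atTop_iSup fun m n hmn => lintegral_mono_set (hs hmn)

end LpTruncation

section BlockNorm

variable {H E : Type*} [Group H] [MeasurableSpace H] [NormedAddCommGroup E]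
  {μ : Measure H} {q : ℝ≥0∞} {B B' : Set H}

lemma blockNorm_top_eq (f : H → E) :
    blockNorm μ q ∞ B f = essSup (fun y => eLpNorm ((y • B).indicator f) q μ) μ :=
  if_pos rfl

lemma blockNorm_top_le_eLpNorm (f : H → E) : blockNorm μ q ∞ B f ≤ eLpNorm f q μ := by
  rw [blockNorm_top_eq]
  exact essSup_le_of_ae_le _ (ae_of_all _ fun y => eLpNorm_indicator_le f)

lemma blockNorm_top_mono (hBB' : B ⊆ B') (f : H → E) :
    blockNorm μ q ∞ B f ≤ blockNorm μ q ∞ B' f := by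
  simp only [blockNorm_top_eq]
  exact essSup_mono_ae (ae_of_all _ fun y =>
    eLpNorm_indicator_mono_set (smul_set_mono hBB') f)

lemma eLpNorm_indicator_le_blockNorm_top {A : Set H} (hA : μ {y | A ⊆ y • B} ≠ 0)
    (f : H → E) : eLpNorm (A.indicator f) q μ ≤ blockNorm μ q ∞ B f := by
  obtain ⟨y, hAy, hy⟩ := Measure.exists_mem_of_measure_ne_zero_of_ae hA
    (ae_restrict_of_ae (ENNReal.ae_le_essSup _))
  rw [blockNorm_top_eq]
  exact (eLpNorm_indicator_mono_set hAy f).trans hy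

end BlockNorm

section Gball

variable {H : Type*} [Group H] {nm : H → ℝ} {γ : ℝ}

lemma mem_gball_one {r : ℝ} {z : H} : z ∈ gball nm 1 r ↔ nm z < r := by
  simp [gball]

lemma gball_one_mono {r s : ℝ} (hrs : r ≤ s) : gball nm 1 r ⊆ gball nm 1 s := fun _ hz =>
  mem_gball_one.2 ((mem_gball_one.1 hz).trans_le hrs)

lemma isOpen_gball [TopologicalSpace H] [IsTopologicalGroup H] (hnm : Continuous nm) (x : H)
    (r : ℝ) : IsOpen (gball nm x r) :=
  isOpen_lt (hnm.comp (continuous_const_mul x⁻¹)) continuous_const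

lemma iUnion_gball_one_natCast : ⋃ n : ℕ, gball nm 1 n = univ :=
  eq_univ_of_forall fun z => mem_iUnion.2 <|
    (exists_nat_gt (nm z)).imp fun _ hn => mem_gball_one.2 hn

lemma gball_one_subset_smul_gball (hinv : ∀ x, nm x⁻¹ = nm x)
    (hmul : ∀ x y, nm (x * y) ≤ γ * (nm x + nm y)) (hγ : 0 < γ) {s r : ℝ} {y : H}
    (hy : y ∈ gball nm 1 s) : gball nm 1 r ⊆ y • gball nm 1 (γ * (s + r)) := by
  intro z hz
  rw [mem_smul_set_iff_inv_smul_mem, smul_eq_mul, mem_gball_one]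
  calc nm (y⁻¹ * z) ≤ γ * (nm y + nm z) := by simpa only [hinv] using hmul y⁻¹ z
    _ < γ * (s + r) := by gcongr; exacts [mem_gball_one.1 hy, mem_gball_one.1 hz]

lemma eLpNorm_indicator_gball_le_blockNorm_top [MeasurableSpace H] {E : Type*}
    [NormedAddCommGroup E] {μ : Measure H} {q : ℝ≥0∞} (hinv : ∀ x, nm x⁻¹ = nm x)
    (hmul : ∀ x y, nm (x * y) ≤ γ * (nm x + nm y)) (hγ : 0 < γ) {s : ℝ}
    (hs : μ (gball nm 1 s) ≠ 0) (r : ℝ) (f : H → E) :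
    eLpNorm ((gball nm 1 r).indicator f) q μ ≤ blockNorm μ q ∞ (gball nm 1 (γ * (s + r))) f :=
  eLpNorm_indicator_le_blockNorm_top
    (measure_mono_null (fun _ hy => gball_one_subset_smul_gball hinv hmul hγ hy) |>.mt hs) f

end Gball

theorem statement13_general
    (μ : Measure G) [μ.IsHaarMeasure]
    (nm : G → ℝ) (γ : ℝ)
    (hnm_cont : Continuous nm)
    (hnm_zero : ∀ x : G, nm x = 0 ↔ x = 1)
    (hnm_inv : ∀ x : G, nm x⁻¹ = nm x)
    (hγ : 1 ≤ γ)
    (hnm_mul : ∀ x y : G, nm (x * y) ≤ γ * (nm x + nm y))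
   (q : ℝ≥0∞)
    (f : G → ℂ) :
    Tendsto (fun r : ℝ => blockNorm μ q ∞ (gball nm 1 r) f) atTop (𝓝 (eLpNorm f q μ)) ∧
      (⨆ (r : ℝ) (_ : 0 < r), blockNorm μ q ∞ (gball nm 1 r) f) = eLpNorm f q μ := by
  set F := fun r : ℝ => blockNorm μ q ∞ (gball nm 1 r) f
  have hγ0 : 0 < γ := one_pos.trans_le hγ
  have hball_pos : μ (gball nm 1 1) ≠ 0 := (isOpen_gball hnm_cont 1 1).measure_ne_zero μ
    ⟨1, mem_gball_one.2 ((hnm_zero 1).2 rfl ▸ one_pos)⟩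
  have hlower (n : ℕ) : eLpNorm ((gball nm 1 n).indicator f) q μ ≤ F (γ * (1 + n)) :=
    eLpNorm_indicator_gball_le_blockNorm_top hnm_inv hnm_mul hγ0 hball_pos n f
  have hradius (n : ℕ) : 0 < γ * (1 + n) := by positivity
  have htrunc : Tendsto (fun n : ℕ => eLpNorm ((gball nm 1 n).indicator f) q μ) atTop
      (𝓝 (eLpNorm f q μ)) := by
    simp_rw [eLpNorm_indicator_eq_eLpNorm_restrict (isOpen_gball hnm_cont 1 _).measurableSet]
    exact tendsto_eLpNorm_restrict_of_monotone
      (fun m n hmn => gball_one_mono (Nat.cast_le.2 hmn)) iUnion_gball_one_natCast f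
  have hsup : ⨆ r, F r = eLpNorm f q μ :=
    le_antisymm (iSup_le fun r => blockNorm_top_le_eLpNorm f)
      (le_of_tendsto' htrunc fun n => (hlower n).trans (le_iSup F _))
  have hsup_pos : ⨆ (r : ℝ) (_ : 0 < r), F r = eLpNorm f q μ :=
    le_antisymm (iSup₂_le fun r _ => blockNorm_top_le_eLpNorm f)
      (le_of_tendsto' htrunc fun n => (hlower n).trans (le_iSup₂_of_le _ (hradius n) le_rfl))
  exact ⟨hsup ▸ tendsto_atTop_iSup fun r s hrs => blockNorm_top_mono (gball_one_mono hrs) f,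
    hsup_pos⟩

theorem statement13
    (μ : Measure G) [μ.IsHaarMeasure]
    (nm : G → ℝ) (γ ρ : ℝ)
    (hnm_cont : Continuous nm)
    (hnm_nonneg : ∀ x : G, 0 ≤ nm x)
    (hnm_zero : ∀ x : G, nm x = 0 ↔ x = 1)
    (hnm_inv : ∀ x : G, nm x⁻¹ = nm x)
    (hγ : 1 ≤ γ)
    (hnm_mul : ∀ x y : G, nm (x * y) ≤ γ * (nm x + nm y))
    (hball_cpt : ∀ (x : G) (r : ℝ), 0 < r → IsCompact (closure (gball nm x r)))
    (hρ : 0 < ρ)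
    (hvol : ∀ r : ℝ, 0 < r → μ (gball nm 1 r) = ENNReal.ofReal (r ^ ρ))
   (q : ℝ≥0∞) (hq1 : 1 ≤ q) (hq : q ≠ ∞)
    (f : G → ℂ) (hf : AEStronglyMeasurable f μ)
    (hfin : ∃ r₀ : ℝ, 0 < r₀ ∧ blockNorm μ q ∞ (gball nm 1 r₀) f < ∞) :
    Tendsto (fun r : ℝ => blockNorm μ q ∞ (gball nm 1 r) f) atTop (𝓝 (eLpNorm f q μ)) ∧
      (⨆ (r : ℝ) (_ : 0 < r), blockNorm μ q ∞ (gball nm 1 r) f) = eLpNorm f q μ :=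
  statement13_general μ nm γ hnm_cont hnm_zero hnm_inv hγ hnm_mul q f
end

section
/- Let p, q, α ∈ [1,∞] with q ≤ α ≤ p. Then for every measurable function f on G: ‖f‖_{q,p,α} ≤ ‖f‖_α. Consequently L^α(G) ⊆ (L^q,L^p)^α(G). -/
open MeasureTheory ENNReal NNReal Set Filter Topology Pointwise

variable {G : Type*} [Group G] [TopologicalSpace G] [IsTopologicalGroup G]
  [T2Space G] [LocallyCompactSpace G] [SigmaCompactSpace G]
  [MeasurableSpace G] [BorelSpace G]

/-!
On each block `A` of `π_r`, Hölder's inequality gives `‖f χ_A‖_q ≤ λ(A)^{1/q - 1/α} ‖f χ_A‖_α`,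
and `λ(A) ≤ λ(B(e,r))` because `A ⊆ x_A B(e, r/(4γ²))² ⊆ x_A B(e,r)`. The weight
`λ(B(e,r))^{1/α - 1/q}` cancels this factor, so it remains to bound the `ℓ^p` norm of the
sequence `(‖f χ_A‖_α)_A` by its `ℓ^α` norm (as `α ≤ p`), which is `‖f‖_α` since the blocks
partition `G`.
-/

theorem ENNReal.tsum_rpow_rpow_one_div_le {ι : Type*} (a : ι → ℝ≥0∞) {s t : ℝ}
    (hs : 0 < s) (hst : s ≤ t) :
    (∑' i, a i ^ t) ^ (1 / t) ≤ (∑' i, a i ^ s) ^ (1 / s) := by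
  have ht : 0 < t := hs.trans_le hst
  set S := ∑' i, a i ^ s
  have hk : 0 ≤ t / s - 1 := by rw [sub_nonneg, le_div_iff₀ hs, one_mul]; exact hst
  have hpow : ∀ x : ℝ≥0∞, x ^ t = x ^ s * (x ^ s) ^ (t / s - 1) := fun x => by
    rw [← ENNReal.rpow_mul, ← ENNReal.rpow_add_of_nonneg _ _ hs.le (by positivity)]
    congr 1
    field_simp
    ring
  have hsum : ∑' i, a i ^ t ≤ S ^ (t / s) :=
    calc ∑' i, a i ^ t ≤ ∑' i, a i ^ s * S ^ (t / s - 1) := by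
          refine ENNReal.tsum_le_tsum fun i => ?_
          rw [hpow]
          gcongr
          exact ENNReal.le_tsum i
      _ = S ^ (1 + (t / s - 1)) := by
          rw [ENNReal.tsum_mul_right, ENNReal.rpow_add_of_nonneg _ _ zero_le_one hk,
            ENNReal.rpow_one]
      _ = S ^ (t / s) := by ring_nf
  calc (∑' i, a i ^ t) ^ (1 / t) ≤ (S ^ (t / s)) ^ (1 / t) := by gcongr
    _ = S ^ (1 / s) := by
      rw [← ENNReal.rpow_mul]
      congr 1
      field_simp

-- Not an equality when `M ∈ {0, ∞}` and `c ≠ 0`: then `M ^ (-c) * M ^ c = 0`.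
theorem ENNReal.rpow_neg_mul_rpow_mul_le (M x : ℝ≥0∞) (c : ℝ) : M ^ (-c) * (M ^ c * x) ≤ x := by
  rw [ENNReal.rpow_neg, ← mul_assoc]
  exact mul_le_of_le_one_left' (ENNReal.inv_mul_le_one _)

section Blocks

variable {X E : Type*} [MeasurableSpace X] [NormedAddCommGroup E] {μ : Measure X}

theorem eLpNorm_indicator_le_measure_rpow_mul {A : Set X} (hA : MeasurableSet A)
    {q α : ℝ≥0∞} (hqα : q ≤ α) {f : X → E} (hf : AEStronglyMeasurable f μ) :
    eLpNorm (A.indicator f) q μ ≤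
      μ A ^ (q⁻¹.toReal - α⁻¹.toReal) * eLpNorm (A.indicator f) α μ := by
  rw [eLpNorm_indicator_eq_eLpNorm_restrict hA, eLpNorm_indicator_eq_eLpNorm_restrict hA]
  have h := eLpNorm_le_eLpNorm_mul_rpow_measure_univ hqα hf.restrict (μ := μ.restrict A)
  rw [Measure.restrict_apply_univ] at h
  simpa [ENNReal.toReal_inv, one_div, mul_comm] using h

theorem tsum_eLpNorm_indicator_rpow_one_div {π : Set (Set X)} (hcnt : π.Countable)
    (hmeas : ∀ A ∈ π, MeasurableSet A) (hdisj : π.PairwiseDisjoint id) (hcover : ⋃₀ π = univ)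
    {α : ℝ≥0∞} (hα0 : α ≠ 0) (hαtop : α ≠ ∞) (f : X → E) :
    (∑' A : π, eLpNorm ((A : Set X).indicator f) α μ ^ α.toReal) ^ (1 / α.toReal) =
      eLpNorm f α μ := by
  have := hcnt.to_subtype
  have hαt : α.toReal ≠ 0 := (ENNReal.toReal_pos hα0 hαtop).ne'
  have hblock : ∀ A : π, eLpNorm ((A : Set X).indicator f) α μ ^ α.toReal =
      ∫⁻ x in A, ‖f x‖ₑ ^ α.toReal ∂μ := fun A => by
    rw [eLpNorm_indicator_eq_eLpNorm_restrict (hmeas A A.2),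
      eLpNorm_eq_lintegral_rpow_enorm_toReal hα0 hαtop, ← ENNReal.rpow_mul, one_div,
      inv_mul_cancel₀ hαt, ENNReal.rpow_one]
  rw [tsum_congr hblock,
    ← lintegral_iUnion (fun A : π => hmeas A A.2)
      (fun A B hAB => hdisj A.2 B.2 (Subtype.coe_injective.ne hAB)),
    ← sUnion_eq_iUnion, hcover, Measure.restrict_univ,
    eLpNorm_eq_lintegral_rpow_enorm_toReal hα0 hαtop]

theorem partNorm_le_rpow_mul_eLpNorm {π : Set (Set X)} (hcnt : π.Countable)
    (hmeas : ∀ A ∈ π, MeasurableSet A) (hdisj : π.PairwiseDisjoint id) (hcover : ⋃₀ π = univ)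
    {M : ℝ≥0∞} (hM : ∀ A ∈ π, μ A ≤ M) {q p α : ℝ≥0∞} (hq0 : q ≠ 0) (hqα : q ≤ α) (hαp : α ≤ p)
    {f : X → E} (hf : AEStronglyMeasurable f μ) :
    partNorm μ q p π f ≤ M ^ (q⁻¹.toReal - α⁻¹.toReal) * eLpNorm f α μ := by
  set c := q⁻¹.toReal - α⁻¹.toReal
  have hc : 0 ≤ c := sub_nonneg.mpr <|
    ENNReal.toReal_mono (ENNReal.inv_ne_top.mpr hq0) (ENNReal.inv_le_inv.mpr hqα)
  have hblock : ∀ A ∈ π, eLpNorm (A.indicator f) q μ ≤ M ^ c * eLpNorm (A.indicator f) α μ :=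
    fun A hA => (eLpNorm_indicator_le_measure_rpow_mul (hmeas A hA) hqα hf).trans
      (by gcongr; exact hM A hA)
  by_cases hp : p = ∞
  · rw [partNorm, if_pos hp]
    exact iSup₂_le fun A hA => (hblock A hA).trans (by gcongr; exact eLpNorm_indicator_le f)
  have hαtop : α ≠ ∞ := ne_top_of_le_ne_top hp hαp
  have hα0 : α ≠ 0 := (pos_iff_ne_zero.mpr hq0 |>.trans_le hqα).ne'
  have hαt : 0 < α.toReal := ENNReal.toReal_pos hα0 hαtop
  have hpt : 0 < p.toReal := hαt.trans_le (ENNReal.toReal_mono hp hαp)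
  rw [partNorm, if_neg hp]
  calc (∑' A : π, eLpNorm ((A : Set X).indicator f) q μ ^ p.toReal) ^ (1 / p.toReal)
      ≤ (∑' A : π, (M ^ c * eLpNorm ((A : Set X).indicator f) α μ) ^ p.toReal)
          ^ (1 / p.toReal) := by
        gcongr with A
        exact hblock A A.2
    _ = M ^ c * (∑' A : π, eLpNorm ((A : Set X).indicator f) α μ ^ p.toReal)
          ^ (1 / p.toReal) := by
        simp_rw [ENNReal.mul_rpow_of_nonneg _ _ hpt.le]
        rw [ENNReal.tsum_mul_left, ENNReal.mul_rpow_of_nonneg _ _ (by positivity),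
          ← ENNReal.rpow_mul, mul_one_div_cancel hpt.ne', ENNReal.rpow_one]
    _ ≤ M ^ c * (∑' A : π, eLpNorm ((A : Set X).indicator f) α μ ^ α.toReal)
          ^ (1 / α.toReal) := by
        gcongr
        exact ENNReal.tsum_rpow_rpow_one_div_le _ hαt (ENNReal.toReal_mono hp hαp)
    _ = M ^ c * eLpNorm f α μ := by
        rw [tsum_eLpNorm_indicator_rpow_one_div hcnt hmeas hdisj hcover hα0 hαtop]

end Blocks

section Group

variable {G : Type*} [Group G]

theorem IsUniformPartition.measure_le [MeasurableSpace G] {π : Set (Set G)} {U V : Set G}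
    (hπ : IsUniformPartition π U V) (μ : Measure G) [μ.IsMulLeftInvariant] {A : Set G}
    (hA : A ∈ π) : μ A ≤ μ V := by
  obtain ⟨x, -, -, hAV⟩ := hπ.2.2.2.2 A hA
  simpa only [measure_smul] using measure_mono hAV (μ := μ)

theorem gball_one_mul_gball_one_subset {nm : G → ℝ} {γ : ℝ} (hγ : 0 < γ)
    (hnm_mul : ∀ x y : G, nm (x * y) ≤ γ * (nm x + nm y)) (s t : ℝ) :
    gball nm 1 s * gball nm 1 t ⊆ gball nm 1 (γ * (s + t)) := by
  rintro _ ⟨x, hx, y, hy, rfl⟩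
  simp only [gball, mem_ofPred_eq, inv_one, one_mul] at hx hy ⊢
  exact (hnm_mul x y).trans_lt (mul_lt_mul_of_pos_left (add_lt_add hx hy) hγ)

theorem gball_one_mul_gball_one_subset_gball_one {nm : G → ℝ} {γ : ℝ} (hγ : 1 ≤ γ)
    (hnm_mul : ∀ x y : G, nm (x * y) ≤ γ * (nm x + nm y)) {r : ℝ} (hr : 0 < r) :
    gball nm 1 (r / (4 * γ ^ 2)) * gball nm 1 (r / (4 * γ ^ 2)) ⊆ gball nm 1 r := by
  refine (gball_one_mul_gball_one_subset (by linarith) hnm_mul _ _).trans fun x hx => ?_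
  have hγr : γ * (r / (4 * γ ^ 2) + r / (4 * γ ^ 2)) ≤ r :=
    calc γ * (r / (4 * γ ^ 2) + r / (4 * γ ^ 2)) = r / (2 * γ) := by field_simp; ring
      _ ≤ r := div_le_self hr.le (by linarith)
  exact (show nm (1⁻¹ * x) < _ from hx).trans_le hγr

end Group

theorem statement14_general
    (μ : Measure G) [μ.IsHaarMeasure]
    (nm : G → ℝ) (γ : ℝ)
    (hγ : 1 ≤ γ)
    (hnm_mul : ∀ x y : G, nm (x * y) ≤ γ * (nm x + nm y))
    (πr : ℝ → Set (Set G))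
    (hπr : ∀ r : ℝ, 0 < r → IsUniformPartition (πr r)
      (gball nm 1 (r / (4 * γ ^ 2)))
      (gball nm 1 (r / (4 * γ ^ 2)) * gball nm 1 (r / (4 * γ ^ 2))))
   (q p α : ℝ≥0∞) (hq1 : 1 ≤ q) (hqα : q ≤ α) (hαp : α ≤ p) :
    (∀ f : G → ℂ, AEStronglyMeasurable f μ →
        alphaNorm μ nm πr q p α f ≤ eLpNorm f α μ) ∧
      ∀ f : G → ℂ, AEStronglyMeasurable f μ →
        eLpNorm f α μ < ∞ → alphaNorm μ nm πr q p α f < ∞ := by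
  have hle : ∀ f : G → ℂ, AEStronglyMeasurable f μ →
      alphaNorm μ nm πr q p α f ≤ eLpNorm f α μ := fun f hf => by
    refine iSup₂_le fun r hr => ?_
    have hblock : ∀ A ∈ πr r, μ A ≤ μ (gball nm 1 r) := fun A hA =>
      ((hπr r hr).measure_le μ hA).trans
        (measure_mono (gball_one_mul_gball_one_subset_gball_one hγ hnm_mul hr))
    obtain ⟨hcnt, hmeas, hdisj, hcover, -⟩ := hπr r hr
    have hpart := partNorm_le_rpow_mul_eLpNorm hcnt hmeas hdisj hcover hblock
      (zero_lt_one.trans_le hq1).ne' hqα hαp hf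
    calc μ (gball nm 1 r) ^ (α⁻¹.toReal - q⁻¹.toReal) * partNorm μ q p (πr r) f
        ≤ μ (gball nm 1 r) ^ (-(q⁻¹.toReal - α⁻¹.toReal)) *
            (μ (gball nm 1 r) ^ (q⁻¹.toReal - α⁻¹.toReal) * eLpNorm f α μ) := by
          rw [neg_sub]
          gcongr
      _ ≤ eLpNorm f α μ := ENNReal.rpow_neg_mul_rpow_mul_le _ _ _
  exact ⟨hle, fun f hf hfin => (hle f hf).trans_lt hfin⟩

theorem statement14
    (μ : Measure G) [μ.IsHaarMeasure]
    (nm : G → ℝ) (γ ρ : ℝ)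
    (hnm_cont : Continuous nm)
    (hnm_nonneg : ∀ x : G, 0 ≤ nm x)
    (hnm_zero : ∀ x : G, nm x = 0 ↔ x = 1)
    (hnm_inv : ∀ x : G, nm x⁻¹ = nm x)
    (hγ : 1 ≤ γ)
    (hnm_mul : ∀ x y : G, nm (x * y) ≤ γ * (nm x + nm y))
    (hball_cpt : ∀ (x : G) (r : ℝ), 0 < r → IsCompact (closure (gball nm x r)))
    (hρ : 0 < ρ)
    (hvol : ∀ r : ℝ, 0 < r → μ (gball nm 1 r) = ENNReal.ofReal (r ^ ρ))
    (πr : ℝ → Set (Set G))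
    (hπr : ∀ r : ℝ, 0 < r → IsUniformPartition (πr r)
      (gball nm 1 (r / (4 * γ ^ 2)))
      (gball nm 1 (r / (4 * γ ^ 2)) * gball nm 1 (r / (4 * γ ^ 2))))
   (q p α : ℝ≥0∞) (hq1 : 1 ≤ q) (hqα : q ≤ α) (hαp : α ≤ p) :
    (∀ f : G → ℂ, AEStronglyMeasurable f μ →
        alphaNorm μ nm πr q p α f ≤ eLpNorm f α μ) ∧
      ∀ f : G → ℂ, AEStronglyMeasurable f μ →
        eLpNorm f α μ < ∞ → alphaNorm μ nm πr q p α f < ∞ :=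
  statement14_general μ nm γ hγ hnm_mul πr hπr q p α hq1 hqα hαp
end
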